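/- For 1 ≤ k ≤ n−1, the groups Γ^k and Γ^{n−k} coincide: an invertible element T with T ∈ Z^×(C^{×(0)}∪C^{×(1)}) satisfies T C^k T^{-1} ⊆ C^k if and only if T C^{n−k} T^{-1} ⊆ C^{n−k}. -/

import Mathlib

open CliffordAlgebra

noncomputable section

variable {n : ℕ} (Q : QuadraticForm ℝ (Fin n → ℝ))

/-- The standard generators `e_a` of the Clifford algebra. -/
def egen (a : Fin n) : CliffordAlgebra Q := ι Q (Pi.single a 1)

/-- The ordered product of generators indexed by a finite set. -/
def eProd (s : Finset (Fin n)) : CliffordAlgebra Q :=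
  ((s.sort (· ≤ ·)).map (egen Q)).prod

/-- The grade-`k` subspace `C^k`, spanned by the products of `k` distinct generators. -/
def gradeSubmodule (k : ℕ) : Submodule ℝ (CliffordAlgebra Q) :=
  Submodule.span ℝ {x | ∃ s : Finset (Fin n), s.card = k ∧ x = eProd Q s}

/-- The set `Z^× (C^{×(0)} ∪ C^{×(1)})` : invertible central elements times
invertible even or odd elements. -/
def Pset : Set (CliffordAlgebra Q) :=
  {T | ∃ W T₀ : CliffordAlgebra Q,
    W ∈ Subalgebra.center ℝ (CliffordAlgebra Q) ∧ IsUnit W ∧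
    (T₀ ∈ evenOdd Q 0 ∨ T₀ ∈ evenOdd Q 1) ∧ IsUnit T₀ ∧ T = W * T₀}

/-- `Q` is diagonal with entries `±1` in the standard basis (an orthonormal-type basis,
expressing nondegeneracy of `Q`). -/
def DiagQ : Prop :=
  (∀ a, Q (Pi.single a 1) = 1 ∨ Q (Pi.single a 1) = -1) ∧
  (∀ a b : Fin n, a ≠ b → QuadraticMap.polar Q (Pi.single a 1) (Pi.single b 1) = 0)

/-!
Let `ω = e₁ ⋯ eₙ`. Anticommutation of the generators gives `e_s e_t = c e_{s ∆ t}` with `c ≠ 0`,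
so right multiplication by `ω` maps `C^k` into `C^{n-k}` and `ω²` is a nonzero scalar `c`.
Moving `ω` past a vector costs the sign `(-1)^(n-1)`, so every even or odd element, hence every
`T ∈ Z^×(C^{×(0)} ∪ C^{×(1)})`, satisfies `T ω T⁻¹ = ± ω`. For `U ∈ C^{n-k}` write
`U = c⁻¹ (U ω) ω` with `U ω ∈ C^k`; if `T` preserves `C^k`, then
`T U T⁻¹ = ± c⁻¹ (T (U ω) T⁻¹) ω ∈ C^{n-k}`. Exchanging `k` and `n - k` gives the converse.
-/

open scoped symmDiff

theorem conj_mem_of_conj_mem_of_mul_mem {K A : Type*} [Field K] [Ring A] [Algebra K A]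
    {M N : Submodule K A} {ω : A} {c ε : K} (hc : c ≠ 0) (hωω : ω * ω = algebraMap K A c)
    (hNM : ∀ x ∈ N, x * ω ∈ M) (hMN : ∀ x ∈ M, x * ω ∈ N) (T : Aˣ)
    (hT : (T : A) * ω = ε • (ω * T)) (hTM : ∀ x ∈ M, (T : A) * x * ↑T⁻¹ ∈ M) :
    ∀ x ∈ N, (T : A) * x * ↑T⁻¹ ∈ N := by
  intro x hx
  have hx_eq : x = c⁻¹ • (x * ω * ω) := by
    rw [mul_assoc, hωω, ← Algebra.commutes, ← Algebra.smul_def, smul_smul, inv_mul_cancel₀ hc,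
      one_smul]
  have hTω : (T : A) * ω * ↑T⁻¹ = ε • ω := by
    rw [hT, smul_mul_assoc, mul_assoc, Units.mul_inv, mul_one]
  have hconj : (T : A) * x * ↑T⁻¹ = (c⁻¹ * ε) • ((T : A) * (x * ω) * ↑T⁻¹ * ω) := by
    calc (T : A) * x * ↑T⁻¹ = c⁻¹ • ((T : A) * (x * ω) * ↑T⁻¹ * ((T : A) * ω * ↑T⁻¹)) := by
          conv_lhs => rw [hx_eq]
          simp only [mul_smul_comm, smul_mul_assoc, mul_assoc, Units.inv_mul_cancel_left]
      _ = _ := by rw [hTω, mul_smul_comm, smul_smul]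
  rw [hconj]
  exact N.smul_mem _ (hMN _ (hTM _ (hNM x hx)))

lemma Finset.insert_eq_singleton_symmDiff {α : Type*} [DecidableEq α] {a : α} {s : Finset α}
    (h : a ∉ s) : insert a s = {a} ∆ s := by
  rw [Finset.insert_eq, Finset.symmDiff_eq_union (Finset.disjoint_singleton_left.2 h)]

def pseudoscalar : CliffordAlgebra Q := eProd Q Finset.univ

lemma eProd_insert_of_forall_lt {a : Fin n} {s : Finset (Fin n)} (h : ∀ x ∈ s, a < x) :
    eProd Q (insert a s) = egen Q a * eProd Q s := by
  rw [eProd, Finset.sort_insert _ (fun x hx => (h x hx).le) (fun ha => (h a ha).false)]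
  simp [eProd]

lemma DiagQ.pairwise_isOrtho (hQ : DiagQ Q) :
    Pairwise fun a b : Fin n => Q.IsOrtho (Pi.single a 1) (Pi.single b 1) :=
  fun a b h => QuadraticMap.isOrtho_polarBilin.mp (hQ.2 a b h)

lemma DiagQ.apply_single_ne_zero (hQ : DiagQ Q) (a : Fin n) : Q (Pi.single a 1) ≠ 0 := by
  rcases hQ.1 a with h | h <;> simp [h]

section Orthogonal

variable (horth : Pairwise fun a b : Fin n => Q.IsOrtho (Pi.single a 1) (Pi.single b 1))
include horth

lemma egen_mul_egen_of_ne {a b : Fin n} (h : a ≠ b) :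
    egen Q a * egen Q b = -(egen Q b * egen Q a) :=
  ι_mul_ι_comm_of_isOrtho (horth h)

lemma egen_mul_eProd_eq_neg_one_pow_smul (a : Fin n) (s : Finset (Fin n)) :
    egen Q a * eProd Q s = (-1 : ℝ) ^ (s.erase a).card • (eProd Q s * egen Q a) := by
  induction s using Finset.induction_on_min with
  | empty => simp [eProd]
  | insert b s hbs ih =>
    have hb : b ∉ s := fun h => (hbs b h).false
    rw [eProd_insert_of_forall_lt Q hbs]
    obtain rfl | hab := eq_or_ne a b
    · rw [Finset.erase_insert hb, mul_assoc (egen Q a) (eProd Q s), ih,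
        Finset.erase_eq_of_notMem hb, mul_smul_comm]
    · rw [Finset.erase_insert_of_ne hab.symm, Finset.card_insert_of_notMem
          (fun h => hb (Finset.mem_of_mem_erase h)), ← mul_assoc, egen_mul_egen_of_ne Q horth hab,
        neg_mul, mul_assoc, ih, mul_smul_comm, pow_succ, mul_neg_one, neg_smul, mul_assoc]

lemma egen_mul_pseudoscalar (a : Fin n) :
    egen Q a * pseudoscalar Q = (-1 : ℝ) ^ (n - 1) • (pseudoscalar Q * egen Q a) := by
  rw [pseudoscalar, egen_mul_eProd_eq_neg_one_pow_smul Q horth,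
    Finset.card_erase_of_mem (Finset.mem_univ a), Finset.card_univ, Fintype.card_fin]

lemma ι_mul_pseudoscalar (m : Fin n → ℝ) :
    ι Q m * pseudoscalar Q = (-1 : ℝ) ^ (n - 1) • (pseudoscalar Q * ι Q m) := by
  have h : (LinearMap.mulRight ℝ (pseudoscalar Q)).comp (ι Q) =
      (-1 : ℝ) ^ (n - 1) • (LinearMap.mulLeft ℝ (pseudoscalar Q)).comp (ι Q) :=
    LinearMap.pi_ext' fun a => LinearMap.ext_ring (egen_mul_pseudoscalar Q horth a)
  exact LinearMap.congr_fun h m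

lemma mul_pseudoscalar_of_mem_range_ι_pow {j : ℕ} {x : CliffordAlgebra Q}
    (hx : x ∈ LinearMap.range (ι Q) ^ j) :
    x * pseudoscalar Q = ((-1 : ℝ) ^ (n - 1)) ^ j • (pseudoscalar Q * x) := by
  induction hx using Submodule.pow_induction_on_left' with
  | algebraMap r => rw [pow_zero, one_smul, Algebra.commutes]
  | add x y i _ _ hx hy => rw [add_mul, mul_add, hx, hy, smul_add]
  | mem_mul m hm i x _ hx =>
    obtain ⟨v, rfl⟩ := hm
    rw [mul_assoc, hx, mul_smul_comm, ← mul_assoc, ι_mul_pseudoscalar Q horth, smul_mul_assoc,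
      smul_smul, ← pow_succ, mul_assoc]

lemma mul_pseudoscalar_of_mem_evenOdd {i : ZMod 2} {x : CliffordAlgebra Q}
    (hx : x ∈ evenOdd Q i) :
    x * pseudoscalar Q = ((-1 : ℝ) ^ (n - 1)) ^ i.val • (pseudoscalar Q * x) := by
  have hsq : ((-1 : ℝ) ^ (n - 1)) ^ 2 = 1 := by
    rw [← pow_mul, mul_comm, pow_mul, neg_one_sq, one_pow]
  refine Submodule.iSup_induction
    (motive := fun x => x * pseudoscalar Q = ((-1 : ℝ) ^ (n - 1)) ^ i.val • (pseudoscalar Q * x))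
    _ hx (fun ⟨j, hj⟩ x hx => ?_) (by simp) fun x y hx hy => ?_
  · rw [mul_pseudoscalar_of_mem_range_ι_pow Q horth hx, pow_eq_pow_mod j hsq, ← hj,
      ZMod.val_natCast]
  · rw [add_mul, mul_add, hx, hy, smul_add]

lemma mul_pseudoscalar_of_mem_Pset {T : CliffordAlgebra Q} (hT : T ∈ Pset Q) :
    ∃ ε : ℝ, T * pseudoscalar Q = ε • (pseudoscalar Q * T) := by
  obtain ⟨W, T₀, hW, -, hT₀, -, rfl⟩ := hT
  obtain ⟨i, hi⟩ : ∃ i, T₀ ∈ evenOdd Q i := hT₀.elim (⟨0, ·⟩) (⟨1, ·⟩)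
  refine ⟨((-1 : ℝ) ^ (n - 1)) ^ i.val, ?_⟩
  rw [mul_assoc, mul_pseudoscalar_of_mem_evenOdd Q horth hi, mul_smul_comm, ← mul_assoc,
    ← Subalgebra.mem_center_iff.mp hW, mul_assoc]

variable (hQ0 : ∀ a : Fin n, Q (Pi.single a 1) ≠ 0)
include hQ0

lemma egen_mul_eProd (a : Fin n) (t : Finset (Fin n)) :
    ∃ c : ℝ, c ≠ 0 ∧ egen Q a * eProd Q t = c • eProd Q ({a} ∆ t) := by
  induction t using Finset.induction_on_min with
  | empty => exact ⟨1, one_ne_zero, by rw [← Finset.bot_eq_empty, symmDiff_bot]; simp [eProd]⟩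
  | insert b t hbt ih =>
    have hb : b ∉ t := fun h => (hbt b h).false
    rw [eProd_insert_of_forall_lt Q hbt, Finset.insert_eq_singleton_symmDiff hb]
    rcases lt_trichotomy a b with hab | rfl | hba
    · have hat : ∀ x ∈ {b} ∆ t, a < x := fun x hx => by
        rcases Finset.mem_union.1 (Finset.symmDiff_subset_union hx) with hx | hx
        · exact (Finset.mem_singleton.1 hx) ▸ hab
        · exact hab.trans (hbt x hx)
      refine ⟨1, one_ne_zero, ?_⟩
      rw [one_smul, ← Finset.insert_eq_singleton_symmDiff (fun h => (hat a h).false),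
        eProd_insert_of_forall_lt Q hat, ← Finset.insert_eq_singleton_symmDiff hb,
        eProd_insert_of_forall_lt Q hbt]
    · refine ⟨Q (Pi.single a 1), hQ0 a, ?_⟩
      rw [symmDiff_symmDiff_cancel_left, ← mul_assoc, egen, ι_sq_scalar, ← Algebra.smul_def]
    · obtain ⟨c, hc, ih⟩ := ih
      have hbs : ∀ x ∈ {a} ∆ t, b < x := fun x hx => by
        rcases Finset.mem_union.1 (Finset.symmDiff_subset_union hx) with hx | hx
        · exact (Finset.mem_singleton.1 hx) ▸ hba
        · exact hbt x hx
      refine ⟨-c, neg_ne_zero.mpr hc, ?_⟩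
      rw [symmDiff_left_comm, ← Finset.insert_eq_singleton_symmDiff (fun h => (hbs b h).false),
        eProd_insert_of_forall_lt Q hbs, ← mul_assoc, egen_mul_egen_of_ne Q horth hba.ne',
        neg_mul, mul_assoc, ih, mul_smul_comm, neg_smul]

lemma eProd_mul_eProd (s t : Finset (Fin n)) :
    ∃ c : ℝ, c ≠ 0 ∧ eProd Q s * eProd Q t = c • eProd Q (s ∆ t) := by
  induction s using Finset.induction_on_min with
  | empty => exact ⟨1, one_ne_zero, by rw [← Finset.bot_eq_empty, bot_symmDiff]; simp [eProd]⟩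
  | insert a s has ih =>
    obtain ⟨c, hc, ih⟩ := ih
    obtain ⟨c', hc', h⟩ := egen_mul_eProd Q horth hQ0 a (s ∆ t)
    refine ⟨c * c', mul_ne_zero hc hc', ?_⟩
    rw [eProd_insert_of_forall_lt Q has, mul_assoc, ih, mul_smul_comm, h, smul_smul,
      Finset.insert_eq_singleton_symmDiff (fun h => (has a h).false), symmDiff_assoc]

lemma pseudoscalar_mul_self :
    ∃ c : ℝ, c ≠ 0 ∧ pseudoscalar Q * pseudoscalar Q = algebraMap ℝ _ c := by
  obtain ⟨c, hc, h⟩ := eProd_mul_eProd Q horth hQ0 Finset.univ Finset.univ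
  refine ⟨c, hc, ?_⟩
  rw [pseudoscalar, h, symmDiff_self, Finset.bot_eq_empty, Algebra.algebraMap_eq_smul_one]
  simp [eProd]

lemma mul_pseudoscalar_mem_gradeSubmodule {j : ℕ} {x : CliffordAlgebra Q}
    (hx : x ∈ gradeSubmodule Q j) : x * pseudoscalar Q ∈ gradeSubmodule Q (n - j) := by
  induction hx using Submodule.span_induction with
  | mem x hx =>
    obtain ⟨s, rfl, rfl⟩ := hx
    obtain ⟨c, -, h⟩ := eProd_mul_eProd Q horth hQ0 s Finset.univ
    rw [pseudoscalar, h, ← Finset.top_eq_univ, symmDiff_top, hnot_eq_compl]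
    refine Submodule.smul_mem _ _ (Submodule.subset_span ⟨sᶜ, ?_, rfl⟩)
    rw [Finset.card_compl, Fintype.card_fin]
  | zero => simp
  | add x y _ _ hx hy => rw [add_mul]; exact add_mem hx hy
  | smul c x _ hx => rw [smul_mul_assoc]; exact Submodule.smul_mem _ _ hx

lemma conj_mem_gradeSubmodule_sub_of_conj_mem {j : ℕ} (hj : j ≤ n) (T : (CliffordAlgebra Q)ˣ)
    (hT : (T : CliffordAlgebra Q) ∈ Pset Q)
    (H : ∀ U ∈ gradeSubmodule Q j, (T : CliffordAlgebra Q) * U * ↑T⁻¹ ∈ gradeSubmodule Q j) :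
    ∀ U ∈ gradeSubmodule Q (n - j),
      (T : CliffordAlgebra Q) * U * ↑T⁻¹ ∈ gradeSubmodule Q (n - j) := by
  obtain ⟨c, hc, hωω⟩ := pseudoscalar_mul_self Q horth hQ0
  obtain ⟨ε, hTω⟩ := mul_pseudoscalar_of_mem_Pset Q horth hT
  refine conj_mem_of_conj_mem_of_mul_mem hc hωω (fun x hx => ?_)
    (fun x hx => mul_pseudoscalar_mem_gradeSubmodule Q horth hQ0 hx) T hTω H
  simpa only [Nat.sub_sub_self hj] using mul_pseudoscalar_mem_gradeSubmodule Q horth hQ0 hx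

end Orthogonal

theorem stmt15 (hQ : DiagQ Q) (k : ℕ) (hk' : k ≤ n - 1)
    (T : (CliffordAlgebra Q)ˣ) (hT : (↑T : CliffordAlgebra Q) ∈ Pset Q) :
    (∀ U ∈ gradeSubmodule Q k,
        (↑T : CliffordAlgebra Q) * U * (↑T⁻¹ : CliffordAlgebra Q) ∈ gradeSubmodule Q k) ↔
      (∀ U ∈ gradeSubmodule Q (n - k),
        (↑T : CliffordAlgebra Q) * U * (↑T⁻¹ : CliffordAlgebra Q) ∈
          gradeSubmodule Q (n - k)) := by
  have hkn : k ≤ n := by omega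
  have horth := hQ.pairwise_isOrtho
  have hQ0 := hQ.apply_single_ne_zero
  refine ⟨conj_mem_gradeSubmodule_sub_of_conj_mem Q horth hQ0 hkn T hT, fun H => ?_⟩
  simpa only [Nat.sub_sub_self hkn] using
    conj_mem_gradeSubmodule_sub_of_conj_mem Q horth hQ0 (Nat.sub_le n k) T hT H
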